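/- arXiv:2104.05005 — 6 statements merged into one kernel-verified Lean document; each statement's English description precedes it below -/
import Mathlib

section
/- Let n ≥ 1 and let M ∈ ℝ^{n×n} be a matrix that is weakly diagonally dominant, whose first super-diagonal and first sub-diagonal entries are all nonzero (M_{i,i+1} ≠ 0 and M_{i+1,i} ≠ 0 for all i = 1,…,n−1), and which has at least one strictly diagonally dominant row. Then M is nonsingular (invertible). -/
open Finset

/-- A real square matrix that is weakly diagonally dominant, has all first super- and
sub-diagonal entries nonzero, and has at least one strictly diagonally dominant row,
is nonsingular. -/
theorem weakly_diag_dominant_strongly_connected_nonsingular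
    {n : ℕ} (hn : 1 ≤ n) (M : Matrix (Fin n) (Fin n) ℝ)
    (hdd : ∀ i, ∑ j ∈ Finset.univ.erase i, |M i j| ≤ |M i i|)
    (hoff : ∀ i j : Fin n, (j : ℕ) = (i : ℕ) + 1 → M i j ≠ 0 ∧ M j i ≠ 0)
    (hstrict : ∃ i, ∑ j ∈ Finset.univ.erase i, |M i j| < |M i i|) :
    M.det ≠ 0 := by
  intro hdet
  obtain ⟨v, hv0, hMv⟩ := (Matrix.exists_mulVec_eq_zero_iff).2 hdet
  obtain ⟨i0, -, hi0⟩ := Finset.exists_max_image Finset.univ (fun i => |v i|)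
    ⟨⟨0, hn⟩, Finset.mem_univ _⟩
  set m : ℝ := |v i0| with hm
  have hle : ∀ i, |v i| ≤ m := fun i => hi0 i (Finset.mem_univ i)
  have hmpos : 0 < m := by
    obtain ⟨j, hj⟩ := Function.ne_iff.1 hv0
    exact lt_of_lt_of_le (abs_pos.2 hj) (hle j)
  -- the key inequality for rows of maximal modulus
  have h1 : ∀ i : Fin n, |v i| = m →
      |M i i| * m ≤ ∑ j ∈ Finset.univ.erase i, |M i j| * |v j| := by
    intro i hi
    have h0 : ∑ j, M i j * v j = 0 := by
      have := congrFun hMv i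
      simpa [Matrix.mulVec, dotProduct] using this
    have hsplit : M i i * v i + ∑ j ∈ Finset.univ.erase i, M i j * v j = 0 := by
      rw [Finset.add_sum_erase _ (fun j => M i j * v j) (Finset.mem_univ i)]; exact h0
    have heq : M i i * v i = -∑ j ∈ Finset.univ.erase i, M i j * v j := by linarith
    calc |M i i| * m = |M i i * v i| := by rw [abs_mul, hi]
      _ = |∑ j ∈ Finset.univ.erase i, M i j * v j| := by rw [heq, abs_neg]
      _ ≤ ∑ j ∈ Finset.univ.erase i, |M i j * v j| := Finset.abs_sum_le_sum_abs _ _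
      _ = ∑ j ∈ Finset.univ.erase i, |M i j| * |v j| := by simp [abs_mul]
  -- maximality propagates along nonzero entries
  have key : ∀ i : Fin n, |v i| = m → ∀ j : Fin n, M i j ≠ 0 → |v j| = m := by
    intro i hi j hMij
    rcases eq_or_ne j i with rfl | hji
    · exact hi
    have h2 : ∑ j ∈ Finset.univ.erase i, |M i j| * |v j|
        ≤ ∑ j ∈ Finset.univ.erase i, |M i j| * m :=
      Finset.sum_le_sum fun k _ => mul_le_mul_of_nonneg_left (hle k) (abs_nonneg _)
    have h3 : ∑ j ∈ Finset.univ.erase i, |M i j| * m ≤ |M i i| * m := by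
      rw [← Finset.sum_mul]
      exact mul_le_mul_of_nonneg_right (hdd i) hmpos.le
    have hsum_eq : ∑ j ∈ Finset.univ.erase i, |M i j| * |v j|
        = ∑ j ∈ Finset.univ.erase i, |M i j| * m :=
      le_antisymm h2 (by linarith [h1 i hi])
    have hterm := (Finset.sum_eq_sum_iff_of_le
      (fun k _ => mul_le_mul_of_nonneg_left (hle k) (abs_nonneg _))).1 hsum_eq
      j (Finset.mem_erase.2 ⟨hji, Finset.mem_univ j⟩)
    exact mul_left_cancel₀ (abs_ne_zero.2 hMij) hterm
  -- propagation steps along the sub/super diagonal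
  have stepUp : ∀ k (hk : k + 1 < n), |v ⟨k, by omega⟩| = m → |v ⟨k + 1, hk⟩| = m := by
    intro k hk h
    exact key _ h _ (hoff ⟨k, by omega⟩ ⟨k + 1, hk⟩ rfl).1
  have stepDown : ∀ k (hk : k + 1 < n), |v ⟨k + 1, hk⟩| = m → |v ⟨k, by omega⟩| = m := by
    intro k hk h
    exact key _ h _ (hoff ⟨k, by omega⟩ ⟨k + 1, hk⟩ rfl).2
  -- descend from i0 to 0
  have down : ∀ d, d ≤ (i0 : ℕ) → |v ⟨(i0 : ℕ) - d, by omega⟩| = m := by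
    intro d
    induction d with
    | zero => intro _; simp [hm]
    | succ d ih =>
      intro hd
      have h := ih (by omega)
      have hk : ((i0 : ℕ) - (d + 1)) + 1 < n := by omega
      have : ((i0 : ℕ) - (d + 1)) + 1 = (i0 : ℕ) - d := by omega
      exact stepDown _ hk (by rw [show (⟨((i0:ℕ) - (d+1)) + 1, hk⟩ : Fin n)
        = ⟨(i0:ℕ) - d, by omega⟩ from Fin.ext this]; exact h)
  have h00 : |v ⟨0, hn⟩| = m := by simpa using down (i0 : ℕ) le_rfl
  -- ascend from 0 to everywhere
  have up : ∀ k (hk : k < n), |v ⟨k, hk⟩| = m := by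
    intro k
    induction k with
    | zero => intro hk; exact h00
    | succ k ih => intro hk; exact stepUp k hk (ih (by omega))
  have hall : ∀ i : Fin n, |v i| = m := fun i => by
    have := up i i.isLt; simpa using this
  -- contradiction at the strictly dominant row
  obtain ⟨k, hk⟩ := hstrict
  have hA := h1 k (hall k)
  have hB : ∑ j ∈ Finset.univ.erase k, |M k j| * |v j|
      = (∑ j ∈ Finset.univ.erase k, |M k j|) * m := by
    rw [Finset.sum_mul]
    exact Finset.sum_congr rfl fun j _ => by rw [hall j]
  have : (∑ j ∈ Finset.univ.erase k, |M k j|) * m < |M k k| * m :=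
    mul_lt_mul_of_pos_right hk hmpos
  linarith
end

section
/- Let n ≥ 1 and let M ∈ ℝ^{n×n} be a matrix that is weakly diagonally dominant, whose diagonal entries are all negative, whose first super-diagonal and first sub-diagonal entries are all nonzero (M_{i,i+1} ≠ 0 and M_{i+1,i} ≠ 0 for all i = 1,…,n−1), and which has at least one strictly diagonally dominant row. Then M is stable: every complex eigenvalue λ of M satisfies Re λ < 0. -/
open Finset

/-!
If `Re μ ≥ 0`, negativity of the diagonal gives `|M k k| ≤ ‖μ - M k k‖`, so weak diagonal
dominance puts `μ` outside the interior of every Gershgorin disc. Taussky's argument then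
applies: at a coordinate of maximal modulus of an eigenvector the Gershgorin estimate is an
equality, which forces every neighbour in the graph of `M` to have maximal modulus as well. Since
the tridiagonal pattern makes that graph connected, `μ` lies on every Gershgorin circle,
contradicting the strictly dominant row.
-/

theorem SimpleGraph.Reachable.mem_of_forall_adj {V : Type*} {G : SimpleGraph V} {S : Set V}
    (hS : ∀ ⦃u v⦄, G.Adj u v → u ∈ S → v ∈ S) {u v : V} (h : G.Reachable u v) (hu : u ∈ S) :
    v ∈ S := by
  rw [SimpleGraph.reachable_iff_reflTransGen] at h
  induction h with
  | refl => exact hu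
  | tail _ hadj ih => exact hS hadj ih

namespace Matrix

variable {ι K : Type*} [Fintype ι] [DecidableEq ι] [NormedField K]
  {A : Matrix ι ι K} {μ : K} {v : ι → K}

theorem norm_sub_diag_mul_le_sum_erase (h : A *ᵥ v = μ • v) (k : ι) :
    ‖μ - A k k‖ * ‖v k‖ ≤ ∑ j ∈ univ.erase k, ‖A k j‖ * ‖v j‖ := by
  have hrow : (μ - A k k) * v k = ∑ j ∈ univ.erase k, A k j * v j := by
    have hk : ∑ j, A k j * v j = μ * v k := by simpa [mulVec, dotProduct] using congrFun h k
    rw [sum_erase_eq_sub (mem_univ k), hk]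
    ring
  calc ‖μ - A k k‖ * ‖v k‖ = ‖∑ j ∈ univ.erase k, A k j * v j‖ := by rw [← hrow, norm_mul]
    _ ≤ ∑ j ∈ univ.erase k, ‖A k j‖ * ‖v j‖ := by
      simpa only [norm_mul] using norm_sum_le (univ.erase k) fun j => A k j * v j

theorem norm_eq_of_forall_norm_le_of_sum_erase_le (h : A *ᵥ v = μ • v) {k : ι}
    (hmax : ∀ j, ‖v j‖ ≤ ‖v k‖) (hdom : ∑ j ∈ univ.erase k, ‖A k j‖ ≤ ‖μ - A k k‖) {j : ι}
    (hj : A k j ≠ 0) : ‖v j‖ = ‖v k‖ := by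
  rcases eq_or_ne j k with rfl | hjk
  · rfl
  have hle : ∀ i ∈ univ.erase k, ‖A k i‖ * ‖v i‖ ≤ ‖A k i‖ * ‖v k‖ :=
    fun i _ => mul_le_mul_of_nonneg_left (hmax i) (norm_nonneg _)
  have hsum : ∑ i ∈ univ.erase k, ‖A k i‖ * ‖v i‖ = ∑ i ∈ univ.erase k, ‖A k i‖ * ‖v k‖ := by
    refine le_antisymm (sum_le_sum hle) ?_
    calc ∑ i ∈ univ.erase k, ‖A k i‖ * ‖v k‖ = (∑ i ∈ univ.erase k, ‖A k i‖) * ‖v k‖ :=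
          (sum_mul _ _ _).symm
      _ ≤ ‖μ - A k k‖ * ‖v k‖ := mul_le_mul_of_nonneg_right hdom (norm_nonneg _)
      _ ≤ _ := norm_sub_diag_mul_le_sum_erase h k
  have := (sum_eq_sum_iff_of_le hle).mp hsum j (mem_erase.mpr ⟨hjk, mem_univ j⟩)
  exact mul_left_cancel₀ (norm_ne_zero_iff.mpr hj) this

theorem norm_eq_norm_of_preconnected {G : SimpleGraph ι} (hG : G.Preconnected)
    (hA : ∀ i j, G.Adj i j → A i j ≠ 0) (h : A *ᵥ v = μ • v)
    (hdom : ∀ k, ∑ j ∈ univ.erase k, ‖A k j‖ ≤ ‖μ - A k k‖) (i j : ι) : ‖v i‖ = ‖v j‖ := by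
  obtain ⟨k, -, hk⟩ := exists_max_image univ (fun j => ‖v j‖) ⟨i, mem_univ i⟩
  have hmax : ∀ j, ‖v j‖ ≤ ‖v k‖ := fun j => hk j (mem_univ j)
  have hall : ∀ j, ‖v j‖ = ‖v k‖ := fun j =>
    (hG k j).mem_of_forall_adj (S := {j | ‖v j‖ = ‖v k‖})
      (fun a b hab ha => (norm_eq_of_forall_norm_le_of_sum_erase_le h (ha ▸ hmax) (hdom a)
        (hA a b hab)).trans ha) rfl
  rw [hall i, hall j]

theorem norm_sub_diag_eq_sum_erase_of_preconnected {G : SimpleGraph ι} (hG : G.Preconnected)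
    (hA : ∀ i j, G.Adj i j → A i j ≠ 0) (hv : v ≠ 0) (h : A *ᵥ v = μ • v)
    (hdom : ∀ k, ∑ j ∈ univ.erase k, ‖A k j‖ ≤ ‖μ - A k k‖) (k : ι) :
    ‖μ - A k k‖ = ∑ j ∈ univ.erase k, ‖A k j‖ := by
  obtain ⟨i, hi⟩ := Function.ne_iff.mp hv
  have hvk : 0 < ‖v k‖ := norm_eq_norm_of_preconnected hG hA h hdom k i ▸ norm_pos_iff.mpr hi
  refine le_antisymm (le_of_mul_le_mul_right ?_ hvk) (hdom k)
  calc ‖μ - A k k‖ * ‖v k‖ ≤ ∑ j ∈ univ.erase k, ‖A k j‖ * ‖v j‖ :=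
        norm_sub_diag_mul_le_sum_erase h k
    _ = (∑ j ∈ univ.erase k, ‖A k j‖) * ‖v k‖ := by
      rw [sum_mul]
      exact sum_congr rfl fun j _ => by rw [norm_eq_norm_of_preconnected hG hA h hdom j k]

end Matrix

theorem Complex.abs_le_norm_sub_ofReal {x : ℝ} (hx : x ≤ 0) {μ : ℂ} (hμ : 0 ≤ μ.re) :
    |x| ≤ ‖μ - x‖ := by
  calc |x| = -x := abs_of_nonpos hx
    _ ≤ (μ - x).re := by simp; linarith
    _ ≤ ‖μ - x‖ := Complex.re_le_norm _

theorem weakly_diag_dominant_neg_diag_strongly_connected_stable_general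
    {n : ℕ} (M : Matrix (Fin n) (Fin n) ℝ)
    (hdd : ∀ i, ∑ j ∈ Finset.univ.erase i, |M i j| ≤ |M i i|)
    (hdiag : ∀ i, M i i < 0)
    (hoff : ∀ i j : Fin n, (j : ℕ) = (i : ℕ) + 1 → M i j ≠ 0 ∧ M j i ≠ 0)
    (hstrict : ∃ i, ∑ j ∈ Finset.univ.erase i, |M i j| < |M i i|)
    (μ : ℂ) (v : Fin n → ℂ) (hv : v ≠ 0)
    (heig : (M.map (fun x : ℝ => (x : ℂ))).mulVec v = μ • v) :
    μ.re < 0 := by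
  by_contra! hre
  set A := M.map (fun x : ℝ => (x : ℂ))
  have hpath : ∀ i j, (SimpleGraph.pathGraph n).Adj i j → A i j ≠ 0 := by
    intro i j hij
    rcases SimpleGraph.pathGraph_adj.mp hij with h | h
    · simpa [A] using (hoff i j h.symm).1
    · simpa [A] using (hoff j i h.symm).2
  have hdom : ∀ k, ∑ j ∈ univ.erase k, ‖A k j‖ ≤ ‖μ - A k k‖ := fun k => by
    simpa [A] using (hdd k).trans (Complex.abs_le_norm_sub_ofReal (hdiag k).le hre)
  obtain ⟨i, hi⟩ := hstrict
  have htight := Matrix.norm_sub_diag_eq_sum_erase_of_preconnected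
    (SimpleGraph.pathGraph_preconnected n) hpath hv heig hdom i
  simp only [A, Matrix.map_apply, Complex.norm_real, Real.norm_eq_abs] at htight
  linarith [Complex.abs_le_norm_sub_ofReal (hdiag i).le hre]

/-- A real square matrix that is weakly diagonally dominant with negative diagonal
entries, all first super- and sub-diagonal entries nonzero, and at least one strictly
diagonally dominant row is stable: every complex eigenvalue has negative real part. -/
theorem weakly_diag_dominant_neg_diag_strongly_connected_stable
    {n : ℕ} (hn : 1 ≤ n) (M : Matrix (Fin n) (Fin n) ℝ)
    (hdd : ∀ i, ∑ j ∈ Finset.univ.erase i, |M i j| ≤ |M i i|)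
    (hdiag : ∀ i, M i i < 0)
    (hoff : ∀ i j : Fin n, (j : ℕ) = (i : ℕ) + 1 → M i j ≠ 0 ∧ M j i ≠ 0)
    (hstrict : ∃ i, ∑ j ∈ Finset.univ.erase i, |M i j| < |M i i|)
    (μ : ℂ) (v : Fin n → ℂ) (hv : v ≠ 0)
    (heig : (M.map (fun x : ℝ => (x : ℂ))).mulVec v = μ • v) :
    μ.re < 0 :=
  weakly_diag_dominant_neg_diag_strongly_connected_stable_general M hdd hdiag hoff hstrict μ v hv
    heig
end

section
/- Let A ∈ ℝ^{n×n} be weakly diagonally dominant with all diagonal entries negative, let τ > 0 and θ ∈ [0,1], and set G = I_n − τθA, where I_n is the n×n identity matrix. Then J_i(G) ≥ 1 for every row index i; consequently G is strictly diagonally dominant, invertible, and its inverse satisfies ‖G^{-1}‖_∞ ≤ 1. Moreover, if θ = 0 then ‖G^{-1}‖_∞ = 1. -/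
open Finset

/-- Maximum (absolute row sum) norm of a real matrix. -/
noncomputable def maxNorm {n m : ℕ} (M : Matrix (Fin n) (Fin m) ℝ) : ℝ :=
  ⨆ i, ∑ j, |M i j|

lemma mul_sign_eq_abs (x : ℝ) : x * Real.sign x = |x| := by
  rcases lt_trichotomy x 0 with h | h | h
  · rw [Real.sign_of_neg h, abs_of_neg h]; ring
  · simp [h]
  · rw [Real.sign_of_pos h, abs_of_pos h]; ring

lemma abs_sign_le_one (x : ℝ) : |Real.sign x| ≤ 1 := by
  rcases Real.sign_apply_eq x with h | h | h <;> rw [h] <;> norm_num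

lemma key_vec {n : ℕ} (hn : 0 < n) (G : Matrix (Fin n) (Fin n) ℝ)
    (h : ∀ i, 1 ≤ |G i i| - ∑ j ∈ Finset.univ.erase i, |G i j|)
    (y : Fin n → ℝ) : ∃ i₀, ∀ k, |y k| ≤ |G.mulVec y i₀| := by
  haveI : Nonempty (Fin n) := ⟨⟨0, hn⟩⟩
  obtain ⟨i₀, hi₀⟩ := Finite.exists_max (fun i => |y i|)
  refine ⟨i₀, fun k => (hi₀ k).trans ?_⟩
  set a := G i₀ i₀ * y i₀ with ha
  set s := ∑ j ∈ Finset.univ.erase i₀, G i₀ j * y j with hs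
  set S := ∑ j ∈ Finset.univ.erase i₀, |G i₀ j| with hS
  have h1 : G.mulVec y i₀ = a + s := by
    rw [Matrix.mulVec, dotProduct, ha, hs, ← Finset.add_sum_erase _ _ (Finset.mem_univ i₀)]
  have h2 : |s| ≤ S * |y i₀| := by
    refine (Finset.abs_sum_le_sum_abs _ _).trans ?_
    rw [hS, Finset.sum_mul]
    exact Finset.sum_le_sum fun j _ => by
      rw [abs_mul]; exact mul_le_mul_of_nonneg_left (hi₀ j) (abs_nonneg _)
  have h3 : |a| ≤ |a + s| + |s| := by
    calc |a| = |(a + s) + (-s)| := by ring_nf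
    _ ≤ |a + s| + |(-s)| := abs_add_le _ _
    _ = |a + s| + |s| := by rw [abs_neg]
  have h4 : |a| = |G i₀ i₀| * |y i₀| := abs_mul _ _
  have h5 : |y i₀| ≤ (|G i₀ i₀| - S) * |y i₀| := le_mul_of_one_le_left (abs_nonneg _) (h i₀)
  have h6 : (|G i₀ i₀| - S) * |y i₀| = |G i₀ i₀| * |y i₀| - S * |y i₀| := by ring
  rw [h1]
  linarith

/-- For a weakly diagonally dominant matrix `A` with negative diagonal, `τ > 0` and
`θ ∈ [0,1]`, the matrix `G = I - τθA` satisfies `J_i(G) ≥ 1` for every row `i`; hence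
`G` is strictly diagonally dominant, invertible, and `‖G⁻¹‖_∞ ≤ 1`, with equality
when `θ = 0`. -/
theorem G_strictly_diag_dominant_inv_norm_le_one
    {n : ℕ} (hn : 0 < n) (A : Matrix (Fin n) (Fin n) ℝ) (τ θ : ℝ)
    (hτ : 0 < τ) (hθ0 : 0 ≤ θ) (hθ1 : θ ≤ 1)
    (hdiag : ∀ i, A i i < 0)
    (hdd : ∀ i, ∑ j ∈ Finset.univ.erase i, |A i j| ≤ |A i i|)
    (G : Matrix (Fin n) (Fin n) ℝ)
    (hG : G = (1 : Matrix (Fin n) (Fin n) ℝ) - (τ * θ) • A) :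
    (∀ i, 1 ≤ |G i i| - ∑ j ∈ Finset.univ.erase i, |G i j|) ∧
    (∀ i, 0 < |G i i| - ∑ j ∈ Finset.univ.erase i, |G i j|) ∧
    IsUnit G.det ∧
    maxNorm G⁻¹ ≤ 1 ∧
    (θ = 0 → maxNorm G⁻¹ = 1) := by
  haveI : Nonempty (Fin n) := ⟨⟨0, hn⟩⟩
  have hτθ : 0 ≤ τ * θ := mul_nonneg hτ.le hθ0
  have key : ∀ i, 1 ≤ |G i i| - ∑ j ∈ Finset.univ.erase i, |G i j| := by
    intro i
    have hGdiag : G i i = 1 - τ * θ * A i i := by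
      rw [hG]; simp [Matrix.sub_apply, Matrix.smul_apply, Matrix.one_apply, smul_eq_mul]
    have hAd : τ * θ * A i i ≤ 0 := mul_nonpos_of_nonneg_of_nonpos hτθ (hdiag i).le
    have habs : |G i i| = 1 - τ * θ * A i i := by
      rw [hGdiag, abs_of_pos]; linarith
    have hsum : ∑ j ∈ Finset.univ.erase i, |G i j|
        = τ * θ * ∑ j ∈ Finset.univ.erase i, |A i j| := by
      rw [Finset.mul_sum]
      refine Finset.sum_congr rfl fun j hj => ?_
      have hji : j ≠ i := Finset.ne_of_mem_erase hj
      have : G i j = -(τ * θ * A i j) := by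
        rw [hG]; simp [Matrix.sub_apply, Matrix.smul_apply, Matrix.one_apply_ne' hji,
          smul_eq_mul]
      rw [this, abs_neg, abs_mul, abs_of_nonneg hτθ]
    rw [habs, hsum]
    have h1 : τ * θ * ∑ j ∈ Finset.univ.erase i, |A i j| ≤ τ * θ * |A i i| :=
      mul_le_mul_of_nonneg_left (hdd i) hτθ
    have h2 : |A i i| = -A i i := abs_of_neg (hdiag i)
    nlinarith
  have keypos : ∀ i, 0 < |G i i| - ∑ j ∈ Finset.univ.erase i, |G i j| :=
    fun i => lt_of_lt_of_le one_pos (key i)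
  have hdet : G.det ≠ 0 := by
    apply det_ne_zero_of_sum_row_lt_diag
    intro k
    have := keypos k
    simp only [Real.norm_eq_abs]
    linarith
  have hunit : IsUnit G.det := isUnit_iff_ne_zero.mpr hdet
  have hGB : G * G⁻¹ = 1 := Matrix.mul_nonsing_inv G hunit
  have hle : maxNorm G⁻¹ ≤ 1 := by
    apply ciSup_le
    intro i
    set B := G⁻¹ with hB
    set x : Fin n → ℝ := fun j => Real.sign (B i j) with hx
    have hy : G.mulVec (B.mulVec x) = x := by
      rw [Matrix.mulVec_mulVec, hGB, Matrix.one_mulVec]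
    obtain ⟨i₀, hi₀⟩ := key_vec hn G key (B.mulVec x)
    have hbound : ∀ k, |B.mulVec x k| ≤ 1 := fun k => by
      refine (hi₀ k).trans ?_
      rw [hy]
      exact abs_sign_le_one _
    have hrow : ∑ j, |B i j| = B.mulVec x i := by
      rw [Matrix.mulVec, dotProduct]
      exact Finset.sum_congr rfl fun j _ => (mul_sign_eq_abs _).symm
    calc ∑ j, |B i j| = B.mulVec x i := hrow
      _ ≤ |B.mulVec x i| := le_abs_self _
      _ ≤ 1 := hbound i
  refine ⟨key, keypos, hunit, hle, fun hθ => ?_⟩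
  have hG1 : G = 1 := by rw [hG, hθ]; simp
  have : G⁻¹ = 1 := by rw [hG1, inv_one]
  rw [this, maxNorm]
  have : ∀ i : Fin n, ∑ j, |(1 : Matrix (Fin n) (Fin n) ℝ) i j| = 1 := by
    intro i
    rw [Finset.sum_eq_single i]
    · simp [Matrix.one_apply]
    · intro j _ hj; simp [Matrix.one_apply_ne' hj]
    · simp
  simp only [this]
  exact ciSup_const
end

section
/- Let A ∈ ℝ^{n×n} be a nonzero matrix that is weakly diagonally dominant with all diagonal entries negative, let θ ∈ [0,1), and let τ > 0 satisfy τ ≤ 2 / ((1−θ)‖A‖_∞). Then the matrix H = I_n + τ(1−θ)A satisfies ‖H‖_∞ ≤ 1. -/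
open Finset

/-- For a nonzero weakly diagonally dominant matrix `A` with negative diagonal,
`θ ∈ [0,1)` and `0 < τ ≤ 2/((1-θ)‖A‖_∞)`, the matrix `H = I + τ(1-θ)A` satisfies
`‖H‖_∞ ≤ 1`. -/
theorem H_norm_le_one_of_time_step_small
    {n : ℕ} (A : Matrix (Fin n) (Fin n) ℝ) (hA : A ≠ 0)
    (hdiag : ∀ i, A i i < 0)
    (hdd : ∀ i, ∑ j ∈ Finset.univ.erase i, |A i j| ≤ |A i i|)
    (θ τ : ℝ) (hθ0 : 0 ≤ θ) (hθ1 : θ < 1)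
    (hτ0 : 0 < τ) (hτ : τ ≤ 2 / ((1 - θ) * maxNorm A)) :
    maxNorm ((1 : Matrix (Fin n) (Fin n) ℝ) + (τ * (1 - θ)) • A) ≤ 1 := by
  have hθ : (0:ℝ) < 1 - θ := by linarith
  -- n positive
  have hn : 0 < n := by
    rcases Nat.eq_zero_or_pos n with h | h
    · exfalso; apply hA; subst h; ext i; exact absurd i.2 (by omega)
    · exact h
  haveI : Nonempty (Fin n) := ⟨⟨0, hn⟩⟩
  -- row sums of A
  set S : Fin n → ℝ := fun i => ∑ j, |A i j| with hS
  have hSle : ∀ i, S i ≤ maxNorm A := fun i =>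
    le_ciSup (Set.Finite.bddAbove (Set.finite_range _)) i
  have hSpos : 0 < maxNorm A := by
    obtain ⟨i, hi⟩ : ∃ i, A i i < 0 := ⟨⟨0, hn⟩, hdiag _⟩
    have : 0 < S i := by
      apply Finset.sum_pos' (fun j _ => abs_nonneg _)
      exact ⟨i, Finset.mem_univ i, abs_pos.2 (ne_of_lt hi)⟩
    linarith [hSle i]
  -- key bound : c * maxNorm A ≤ 2
  set c : ℝ := τ * (1 - θ) with hc
  have hc0 : 0 < c := mul_pos hτ0 hθ
  have hkey : c * maxNorm A ≤ 2 := by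
    have hden : 0 < (1 - θ) * maxNorm A := mul_pos hθ hSpos
    rw [hc]
    calc τ * (1 - θ) * maxNorm A ≤ (2 / ((1 - θ) * maxNorm A)) * ((1 - θ) * maxNorm A) := by
          rw [mul_assoc]; exact mul_le_mul_of_nonneg_right hτ (le_of_lt hden)
      _ = 2 := div_mul_cancel₀ 2 (ne_of_gt hden)
  -- row sums of H bounded by 1
  apply ciSup_le
  intro i
  have hsplit : ∑ j, |((1 : Matrix (Fin n) (Fin n) ℝ) + c • A) i j|
      = |1 + c * A i i| + ∑ j ∈ Finset.univ.erase i, (c * |A i j|) := by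
    rw [← Finset.add_sum_erase _ _ (Finset.mem_univ i)]
    congr 1
    · simp [Matrix.add_apply, Matrix.smul_apply, Matrix.one_apply, smul_eq_mul]
    · apply Finset.sum_congr rfl
      intro j hj
      have hji : j ≠ i := Finset.ne_of_mem_erase hj
      simp [Matrix.add_apply, Matrix.smul_apply, Matrix.one_apply, hji.symm,
        Ne.symm hji, abs_mul, abs_of_pos hc0, smul_eq_mul]
  rw [hsplit, ← Finset.mul_sum]
  set E : ℝ := ∑ j ∈ Finset.univ.erase i, |A i j| with hE
  have hE0 : 0 ≤ E := Finset.sum_nonneg fun j _ => abs_nonneg _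
  have hEd : E ≤ |A i i| := hdd i
  have hd : A i i < 0 := hdiag i
  have habs : |A i i| = -A i i := abs_of_neg hd
  have hSi : S i = |A i i| + E := by
    rw [hS, hE]; exact (Finset.add_sum_erase _ _ (Finset.mem_univ i)).symm
  have hcS : c * S i ≤ 2 :=
    le_trans (mul_le_mul_of_nonneg_left (hSle i) (le_of_lt hc0)) hkey
  rcases le_or_gt 0 (1 + c * A i i) with h | h
  · rw [abs_of_nonneg h]
    have : c * E ≤ c * (-A i i) := by
      apply mul_le_mul_of_nonneg_left _ (le_of_lt hc0); rw [← habs]; exact hEd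
    nlinarith
  · rw [abs_of_neg h]
    have : c * (|A i i| + E) ≤ 2 := by rw [← hSi]; exact hcS
    nlinarith [habs]
end

section
/- Let A ∈ ℝ^{n×n} be a nonzero matrix that is weakly diagonally dominant with all diagonal entries negative, let θ ∈ [0,1), and let τ > 0 satisfy τ > 2 / ((1−θ)‖A‖_∞). Then the matrix H = I_n + τ(1−θ)A satisfies ‖H‖_∞ > 1. Hence the time-step restriction τ ≤ 2 / ((1−θ)‖A‖_∞) for the bound ‖I_n + τ(1−θ)A‖_∞ ≤ 1 is sharp. -/
open Finset

/-- For a nonzero weakly diagonally dominant matrix `A` with negative diagonal,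
`θ ∈ [0,1)` and `τ > 2/((1-θ)‖A‖_∞)`, the matrix `H = I + τ(1-θ)A` satisfies
`‖H‖_∞ > 1`; hence the time-step restriction is sharp. -/
theorem H_norm_gt_one_of_time_step_large
    {n : ℕ} (A : Matrix (Fin n) (Fin n) ℝ) (hA : A ≠ 0)
    (hdiag : ∀ i, A i i < 0)
    (hdd : ∀ i, ∑ j ∈ Finset.univ.erase i, |A i j| ≤ |A i i|)
    (θ τ : ℝ) (hθ0 : 0 ≤ θ) (hθ1 : θ < 1)
    (hτ0 : 0 < τ) (hτ : 2 / ((1 - θ) * maxNorm A) < τ) :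
    1 < maxNorm ((1 : Matrix (Fin n) (Fin n) ℝ) + (τ * (1 - θ)) • A) := by
  have hn : n ≠ 0 := by
    rintro rfl
    exact hA (Subsingleton.elim _ _)
  haveI : NeZero n := ⟨hn⟩
  set c := τ * (1 - θ) with hc
  have hθ' : 0 < 1 - θ := by linarith
  have hcpos : 0 < c := mul_pos hτ0 hθ'
  obtain ⟨i, hi⟩ := Finite.exists_max (fun i : Fin n => ∑ j, |A i j|)
  have hS : maxNorm A = ∑ j, |A i j| := by
    unfold maxNorm
    exact le_antisymm (ciSup_le hi)
      (le_ciSup (f := fun i : Fin n => ∑ j, |A i j|) (Set.Finite.bddAbove (Set.finite_range _)) i)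
  have hSpos : 0 < maxNorm A := by
    rw [hS]
    have h0 : 0 < |A i i| := abs_pos.2 (ne_of_lt (hdiag i))
    exact lt_of_lt_of_le h0
      (Finset.single_le_sum (f := fun j => |A i j|) (fun j _ => abs_nonneg _) (mem_univ i))
  have hkey : 2 < c * maxNorm A := by
    rw [div_lt_iff₀ (by positivity)] at hτ
    nlinarith [hτ]
  set R := ∑ j ∈ Finset.univ.erase i, |A i j| with hR
  have hsplit : ∑ j, |A i j| = |A i i| + R := by
    rw [hR, add_comm, Finset.sum_erase_add _ _ (mem_univ i)]
  have hRnonneg : 0 ≤ R := Finset.sum_nonneg fun _ _ => abs_nonneg _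
  have hRd := hdd i
  have hdiagi := hdiag i
  have habs : |A i i| = -A i i := abs_of_neg hdiagi
  have hkey2 : 2 < c * (|A i i| + R) := by rw [← hsplit, ← hS]; exact hkey
  have h1 : 1 < c * |A i i| := by nlinarith
  have hrow : ∑ j, |((1 : Matrix (Fin n) (Fin n) ℝ) + c • A) i j|
      = (c * |A i i| - 1) + c * R := by
    rw [← Finset.add_sum_erase _ _ (mem_univ i)]
    have h11 : ((1 : Matrix (Fin n) (Fin n) ℝ) + c • A) i i = 1 + c * A i i := by
      simp [Matrix.add_apply, Matrix.one_apply, Matrix.smul_apply]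
    have habs1 : |1 + c * A i i| = c * |A i i| - 1 := by
      rw [abs_of_neg (by nlinarith)]; rw [habs]; ring
    rw [h11, habs1, hR, Finset.mul_sum]
    congr 1
    apply Finset.sum_congr rfl
    intro j hj
    have hji : j ≠ i := Finset.ne_of_mem_erase hj
    have : ((1 : Matrix (Fin n) (Fin n) ℝ) + c • A) i j = c * A i j := by
      simp [Matrix.add_apply, Matrix.one_apply, Matrix.smul_apply, Ne.symm hji]
    rw [this, abs_mul, abs_of_pos hcpos]
  have hle : ∑ j, |((1 : Matrix (Fin n) (Fin n) ℝ) + c • A) i j|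
      ≤ maxNorm ((1 : Matrix (Fin n) (Fin n) ℝ) + c • A) := by
    unfold maxNorm
    exact le_ciSup (f := fun i : Fin n => ∑ j, |((1 : Matrix (Fin n) (Fin n) ℝ) + c • A) i j|) (Set.Finite.bddAbove (Set.finite_range _)) i
  calc (1 : ℝ) < (c * |A i i| - 1) + c * R := by nlinarith
    _ = _ := hrow.symm
    _ ≤ _ := hle
end

section
/- Let N ≥ 1, T > 0, η > 0, C_B ≥ 0 and θ ∈ [0,1]. Let A^0, …, A^N ∈ ℝ^{n×n} be matrices, each weakly diagonally dominant with all diagonal entries negative and satisfying ‖A^k‖_∞ ≤ 2η. Let B^0, …, B^N ∈ ℝ^{n×m} be matrices with ‖B^k‖_∞ ≤ C_B, and let g^0, …, g^N ∈ ℝ^m. Let τ > 0 with τN ≤ T, and additionally assume τ ≤ 1/((1−θ)η) in the case θ < 1 (no restriction on τ in the case θ = 1). Then for every k = 0, …, N−1 the matrix I_n − τθA^{k+1} is invertible, so the θ-implicit scheme (I_n − τθA^{k+1}) Y^{k+1} = (I_n + τ(1−θ)A^k) Y^k + τ(θ B^{k+1} g^{k+1} + (1−θ) B^k g^k), starting from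 a given Y^0 ∈ ℝ^n, uniquely determines Y^1, …, Y^N, and for every k = 1, …, N one has ‖Y^k‖_∞ ≤ ‖Y^0‖_∞ + C_B T · max_{0≤j≤k} ‖g^j‖_∞. -/
open Finset

/-- Maximum norm of a real vector. -/
noncomputable def vecMaxNorm {n : ℕ} (v : Fin n → ℝ) : ℝ := ⨆ i, |v i|

/-- The `θ`-implicit scheme
`(I − τθ A^{k+1}) Y^{k+1} = (I + τ(1−θ)A^k) Y^k + τ(θ B^{k+1} g^{k+1} + (1−θ) B^k g^k)`. -/
def ThetaScheme {n m : ℕ} (N : ℕ) (τ θ : ℝ)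
    (A : ℕ → Matrix (Fin n) (Fin n) ℝ) (B : ℕ → Matrix (Fin n) (Fin m) ℝ)
    (g : ℕ → (Fin m → ℝ)) (Y : ℕ → (Fin n → ℝ)) : Prop :=
  ∀ k, k < N →
    ((1 : Matrix (Fin n) (Fin n) ℝ) - (τ * θ) • A (k + 1)).mulVec (Y (k + 1)) =
      ((1 : Matrix (Fin n) (Fin n) ℝ) + (τ * (1 - θ)) • A k).mulVec (Y k)
        + τ • (θ • (B (k + 1)).mulVec (g (k + 1)) + (1 - θ) • (B k).mulVec (g k))

lemma abs_le_vecMaxNorm {n : ℕ} (v : Fin n → ℝ) (i : Fin n) : |v i| ≤ vecMaxNorm v :=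
  le_ciSup (f := fun i => |v i|) (Set.Finite.bddAbove (Set.finite_range _)) i

lemma vecMaxNorm_nonneg {n : ℕ} (v : Fin n → ℝ) : 0 ≤ vecMaxNorm v := by
  rcases isEmpty_or_nonempty (Fin n) with h | h
  · simp [vecMaxNorm, Real.iSup_of_isEmpty]
  · exact le_trans (abs_nonneg _) (abs_le_vecMaxNorm v (Classical.arbitrary _))

lemma vecMaxNorm_le {n : ℕ} {v : Fin n → ℝ} {c : ℝ} (hc : 0 ≤ c) (h : ∀ i, |v i| ≤ c) :
    vecMaxNorm v ≤ c := by
  rcases isEmpty_or_nonempty (Fin n) with hn | hn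
  · simpa [vecMaxNorm, Real.iSup_of_isEmpty] using hc
  · exact ciSup_le h

lemma vecMaxNorm_eq_zero {n : ℕ} {v : Fin n → ℝ} (h : vecMaxNorm v ≤ 0) : v = 0 := by
  funext i
  exact abs_eq_zero.mp (le_antisymm (le_trans (abs_le_vecMaxNorm v i) h) (abs_nonneg _))

lemma rowSum_le_maxNorm {n m : ℕ} (M : Matrix (Fin n) (Fin m) ℝ) (i : Fin n) :
    ∑ j, |M i j| ≤ maxNorm M :=
  le_ciSup (f := fun i => ∑ j, |M i j|) (Set.Finite.bddAbove (Set.finite_range _)) i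

/-- Row-wise bound for `B.mulVec g`. -/
lemma mulVec_bound {n m : ℕ} {B : Matrix (Fin n) (Fin m) ℝ} {C : ℝ}
    (hC : 0 ≤ C) (hB : maxNorm B ≤ C) (g : Fin m → ℝ) :
    vecMaxNorm (B.mulVec g) ≤ C * vecMaxNorm g := by
  refine vecMaxNorm_le (mul_nonneg hC (vecMaxNorm_nonneg g)) fun i => ?_
  calc |B.mulVec g i| = |∑ j, B i j * g j| := rfl
    _ ≤ ∑ j, |B i j * g j| := Finset.abs_sum_le_sum_abs _ _
    _ ≤ ∑ j, |B i j| * vecMaxNorm g := by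
        refine Finset.sum_le_sum fun j _ => ?_
        rw [abs_mul]
        exact mul_le_mul_of_nonneg_left (abs_le_vecMaxNorm g j) (abs_nonneg _)
    _ = (∑ j, |B i j|) * vecMaxNorm g := by rw [Finset.sum_mul]
    _ ≤ C * vecMaxNorm g :=
        mul_le_mul_of_nonneg_right ((rowSum_le_maxNorm B i).trans hB) (vecMaxNorm_nonneg g)

lemma vecMaxNorm_add_le {n : ℕ} (v w : Fin n → ℝ) :
    vecMaxNorm (v + w) ≤ vecMaxNorm v + vecMaxNorm w := by
  refine vecMaxNorm_le (add_nonneg (vecMaxNorm_nonneg v) (vecMaxNorm_nonneg w)) fun i => ?_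
  exact (abs_add_le _ _).trans (add_le_add (abs_le_vecMaxNorm v i) (abs_le_vecMaxNorm w i))

lemma vecMaxNorm_smul_le {n : ℕ} {c : ℝ} (hc : 0 ≤ c) (v : Fin n → ℝ) :
    vecMaxNorm (c • v) ≤ c * vecMaxNorm v := by
  refine vecMaxNorm_le (mul_nonneg hc (vecMaxNorm_nonneg v)) fun i => ?_
  simp only [Pi.smul_apply, smul_eq_mul, abs_mul, abs_of_nonneg hc]
  exact mul_le_mul_of_nonneg_left (abs_le_vecMaxNorm v i) hc

/-- entrywise formula -/
lemma mulVec_one_sub {n : ℕ} (s : ℝ) (A0 : Matrix (Fin n) (Fin n) ℝ) (x : Fin n → ℝ) (i : Fin n) :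
    ((1 - s • A0).mulVec x) i
      = (1 - s * A0 i i) * x i - s * ∑ j ∈ Finset.univ.erase i, A0 i j * x j := by
  have h : (A0.mulVec x) i = A0 i i * x i + ∑ j ∈ Finset.univ.erase i, A0 i j * x j :=
    (Finset.add_sum_erase _ (fun j => A0 i j * x j) (Finset.mem_univ i)).symm
  rw [Matrix.sub_mulVec, Matrix.smul_mulVec, Matrix.one_mulVec]
  simp only [Pi.sub_apply, Pi.smul_apply, smul_eq_mul, h]
  ring

lemma mulVec_one_add {n : ℕ} (s : ℝ) (A0 : Matrix (Fin n) (Fin n) ℝ) (x : Fin n → ℝ) (i : Fin n) :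
    ((1 + s • A0).mulVec x) i
      = (1 + s * A0 i i) * x i + s * ∑ j ∈ Finset.univ.erase i, A0 i j * x j := by
  have h : (A0.mulVec x) i = A0 i i * x i + ∑ j ∈ Finset.univ.erase i, A0 i j * x j :=
    (Finset.add_sum_erase _ (fun j => A0 i j * x j) (Finset.mem_univ i)).symm
  rw [Matrix.add_mulVec, Matrix.smul_mulVec, Matrix.one_mulVec]
  simp only [Pi.add_apply, Pi.smul_apply, smul_eq_mul, h]
  ring

/-- Key lower bound: `‖x‖ ≤ ‖(I - s A) x‖` for weakly diagonally dominant `A`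
with negative diagonal and `s ≥ 0`. -/
lemma key_lower {n : ℕ} {s : ℝ} (hs : 0 ≤ s) {A0 : Matrix (Fin n) (Fin n) ℝ}
    (hdd : ∀ i, ∑ j ∈ Finset.univ.erase i, |A0 i j| ≤ |A0 i i|)
    (hdiag : ∀ i, A0 i i < 0) (x : Fin n → ℝ) :
    vecMaxNorm x ≤ vecMaxNorm ((1 - s • A0).mulVec x) := by
  rcases isEmpty_or_nonempty (Fin n) with hn | hn
  · simp [vecMaxNorm, Real.iSup_of_isEmpty]
  obtain ⟨i, -, hi⟩ := Finset.exists_max_image Finset.univ (fun j => |x j|) ⟨Classical.arbitrary _, Finset.mem_univ _⟩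
  have hi' : ∀ j, |x j| ≤ |x i| := fun j => hi j (Finset.mem_univ j)
  have hxle : vecMaxNorm x ≤ |x i| := vecMaxNorm_le (abs_nonneg _) hi'
  refine hxle.trans (le_trans ?_ (abs_le_vecMaxNorm _ i))
  rw [mulVec_one_sub]
  set S := ∑ j ∈ Finset.univ.erase i, A0 i j * x j with hS
  have hSbound : |S| ≤ |A0 i i| * |x i| := by
    calc |S| ≤ ∑ j ∈ Finset.univ.erase i, |A0 i j * x j| := Finset.abs_sum_le_sum_abs _ _
      _ ≤ ∑ j ∈ Finset.univ.erase i, |A0 i j| * |x i| := by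
          refine Finset.sum_le_sum fun j _ => ?_
          rw [abs_mul]
          exact mul_le_mul_of_nonneg_left (hi' j) (abs_nonneg _)
      _ = (∑ j ∈ Finset.univ.erase i, |A0 i j|) * |x i| := by rw [Finset.sum_mul]
      _ ≤ |A0 i i| * |x i| := mul_le_mul_of_nonneg_right (hdd i) (abs_nonneg _)
  have hA : |A0 i i| = -A0 i i := abs_of_neg (hdiag i)
  have h1 : (0:ℝ) < 1 - s * A0 i i := by nlinarith [hdiag i]
  have := abs_sub_abs_le_abs_sub ((1 - s * A0 i i) * x i) (s * S)
  have habs1 : |(1 - s * A0 i i) * x i| = (1 - s * A0 i i) * |x i| := by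
    rw [abs_mul, abs_of_pos h1]
  have habs2 : |s * S| = s * |S| := by rw [abs_mul, abs_of_nonneg hs]
  have hfin : |x i| ≤ |(1 - s * A0 i i) * x i - s * S| := by
    have h2 : |(1 - s * A0 i i) * x i| - |s * S| ≤ |(1 - s * A0 i i) * x i - s * S| :=
      abs_sub_abs_le_abs_sub _ _
    rw [habs1, habs2] at h2
    rw [hA] at hSbound
    have key0 : s * |S| ≤ s * (-A0 i i * |x i|) :=
      mul_le_mul_of_nonneg_left hSbound hs
    nlinarith [key0]
  exact hfin

/-- Key upper bound: `‖(I + s A) x‖ ≤ ‖x‖`. -/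
lemma key_upper {n : ℕ} {s : ℝ} (hs : 0 ≤ s) {A0 : Matrix (Fin n) (Fin n) ℝ}
    (hdd : ∀ i, ∑ j ∈ Finset.univ.erase i, |A0 i j| ≤ |A0 i i|)
    (hdiag : ∀ i, A0 i i < 0)
    (h2 : ∀ i, s * ∑ j, |A0 i j| ≤ 2) (x : Fin n → ℝ) :
    vecMaxNorm ((1 + s • A0).mulVec x) ≤ vecMaxNorm x := by
  refine vecMaxNorm_le (vecMaxNorm_nonneg x) fun i => ?_
  rw [mulVec_one_add]
  set S := ∑ j ∈ Finset.univ.erase i, A0 i j * x j with hS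
  set X := vecMaxNorm x with hX
  have hXnn : 0 ≤ X := vecMaxNorm_nonneg x
  have hxX : ∀ j, |x j| ≤ X := fun j => abs_le_vecMaxNorm x j
  have hSbound : |S| ≤ (∑ j ∈ Finset.univ.erase i, |A0 i j|) * X := by
    calc |S| ≤ ∑ j ∈ Finset.univ.erase i, |A0 i j * x j| := Finset.abs_sum_le_sum_abs _ _
      _ ≤ ∑ j ∈ Finset.univ.erase i, |A0 i j| * X := by
          refine Finset.sum_le_sum fun j _ => ?_
          rw [abs_mul]; exact mul_le_mul_of_nonneg_left (hxX j) (abs_nonneg _)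
      _ = _ := by rw [Finset.sum_mul]
  set R := ∑ j ∈ Finset.univ.erase i, |A0 i j| with hR
  have hRnn : 0 ≤ R := Finset.sum_nonneg fun j _ => abs_nonneg _
  have hA : |A0 i i| = -A0 i i := abs_of_neg (hdiag i)
  have hrow : ∑ j, |A0 i j| = |A0 i i| + R :=
    (Finset.add_sum_erase _ (fun j => |A0 i j|) (Finset.mem_univ i)).symm
  have h2i := h2 i
  rw [hrow] at h2i
  have htri : |(1 + s * A0 i i) * x i + s * S| ≤ |1 + s * A0 i i| * |x i| + s * |S| := by
    calc |(1 + s * A0 i i) * x i + s * S| ≤ |(1 + s * A0 i i) * x i| + |s * S| := abs_add_le _ _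
      _ = |1 + s * A0 i i| * |x i| + s * |S| := by rw [abs_mul, abs_mul, abs_of_nonneg hs]
  have hcoef : |1 + s * A0 i i| + s * R ≤ 1 := by
    rcases le_or_gt (s * (-A0 i i)) 1 with hc | hc
    · rw [abs_of_nonneg (by nlinarith)]
      nlinarith [mul_le_mul_of_nonneg_left (hdd i) hs]
    · rw [abs_of_neg (by nlinarith)]
      nlinarith
  calc |(1 + s * A0 i i) * x i + s * S| ≤ |1 + s * A0 i i| * |x i| + s * |S| := htri
    _ ≤ |1 + s * A0 i i| * X + s * (R * X) := by
        refine add_le_add (mul_le_mul_of_nonneg_left (hxX i) (abs_nonneg _)) ?_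
        exact mul_le_mul_of_nonneg_left hSbound hs
    _ = (|1 + s * A0 i i| + s * R) * X := by ring
    _ ≤ 1 * X := mul_le_mul_of_nonneg_right hcoef hXnn
    _ = X := one_mul X

lemma vecMaxNorm_zero {n : ℕ} : vecMaxNorm (0 : Fin n → ℝ) = 0 :=
  le_antisymm (vecMaxNorm_le le_rfl (by simp)) (vecMaxNorm_nonneg _)

/-- Stability of the `θ`-implicit finite difference scheme: under weak diagonal
dominance and negative diagonals of the `A^k`, the bounds `‖A^k‖_∞ ≤ 2η`,
`‖B^k‖_∞ ≤ C_B`, `τ N ≤ T`, and the time-step restriction `τ ≤ 1/((1−θ)η)` when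
`θ < 1` (none when `θ = 1`), the matrices `I − τθ A^{k+1}` are invertible, the
scheme uniquely determines `Y^1,…,Y^N` from `Y^0`, and
`‖Y^k‖_∞ ≤ ‖Y^0‖_∞ + C_B T max_{0≤j≤k} ‖g^j‖_∞` for `k = 1,…,N`. -/
theorem theta_implicit_scheme_stable
    {n m : ℕ} (N : ℕ) (hN : 1 ≤ N) (T η C_B θ τ : ℝ)
    (hT : 0 < T) (hη : 0 < η) (hCB : 0 ≤ C_B) (hθ0 : 0 ≤ θ) (hθ1 : θ ≤ 1)
    (A : ℕ → Matrix (Fin n) (Fin n) ℝ) (B : ℕ → Matrix (Fin n) (Fin m) ℝ)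
    (g : ℕ → (Fin m → ℝ))
    (hAdd : ∀ k, k ≤ N → ∀ i, ∑ j ∈ Finset.univ.erase i, |A k i j| ≤ |A k i i|)
    (hAdiag : ∀ k, k ≤ N → ∀ i, A k i i < 0)
    (hAnorm : ∀ k, k ≤ N → maxNorm (A k) ≤ 2 * η)
    (hB : ∀ k, k ≤ N → maxNorm (B k) ≤ C_B)
    (hτ : 0 < τ) (hτN : τ * N ≤ T)
    (hτθ : θ < 1 → τ ≤ 1 / ((1 - θ) * η)) :
    (∀ k, k < N →
      IsUnit ((1 : Matrix (Fin n) (Fin n) ℝ) - (τ * θ) • A (k + 1)).det) ∧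
    (∀ Y Z : ℕ → (Fin n → ℝ), ThetaScheme N τ θ A B g Y → ThetaScheme N τ θ A B g Z →
      Y 0 = Z 0 → ∀ k, k ≤ N → Y k = Z k) ∧
    (∀ Y : ℕ → (Fin n → ℝ), ThetaScheme N τ θ A B g Y →
      ∀ k, 1 ≤ k → k ≤ N →
        vecMaxNorm (Y k) ≤ vecMaxNorm (Y 0)
          + C_B * T * (Finset.range (k + 1)).sup' (by simp) (fun j => vecMaxNorm (g j))) := by
  have hτθnn : 0 ≤ τ * θ := mul_nonneg hτ.le hθ0
  have hs1 : 0 ≤ τ * (1 - θ) := mul_nonneg hτ.le (by linarith)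
  have hlow : ∀ k, k ≤ N → ∀ x : Fin n → ℝ,
      vecMaxNorm x ≤ vecMaxNorm (((1 : Matrix (Fin n) (Fin n) ℝ) - (τ * θ) • A k).mulVec x) :=
    fun k hk x => key_lower hτθnn (hAdd k hk) (hAdiag k hk) x
  have h2 : ∀ k, k ≤ N → ∀ i, (τ * (1 - θ)) * ∑ j, |A k i j| ≤ 2 := by
    intro k hk i
    have hrow : ∑ j, |A k i j| ≤ 2 * η := (rowSum_le_maxNorm _ i).trans (hAnorm k hk)
    have hrownn : 0 ≤ ∑ j, |A k i j| := Finset.sum_nonneg fun j _ => abs_nonneg _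
    rcases eq_or_lt_of_le hθ1 with h | h
    · rw [← h]; simp
    · have hτs := hτθ h
      have h1θ : 0 < 1 - θ := by linarith
      have hpos : 0 < (1 - θ) * η := mul_pos h1θ hη
      have hτη : τ * ((1 - θ) * η) ≤ 1 := (le_div_iff₀ hpos).mp hτs
      nlinarith [mul_le_mul_of_nonneg_left hrow hs1]
  have hinj : ∀ k, k ≤ N → ∀ x y : Fin n → ℝ,
      ((1 : Matrix (Fin n) (Fin n) ℝ) - (τ * θ) • A k).mulVec x
        = ((1 : Matrix (Fin n) (Fin n) ℝ) - (τ * θ) • A k).mulVec y → x = y := by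
    intro k hk x y hxy
    have h := hlow k hk (x - y)
    rw [Matrix.mulVec_sub, hxy, sub_self, vecMaxNorm_zero] at h
    exact sub_eq_zero.mp (vecMaxNorm_eq_zero h)
  refine ⟨?_, ?_, ?_⟩
  · intro k hk
    rw [isUnit_iff_ne_zero]
    intro hdet
    obtain ⟨v, hv0, hv⟩ := Matrix.exists_mulVec_eq_zero_iff.mpr hdet
    have h := hlow (k + 1) hk v
    rw [hv, vecMaxNorm_zero] at h
    exact hv0 (vecMaxNorm_eq_zero h)
  · intro Y Z hY hZ h0 k
    induction k with
    | zero => intro _; exact h0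
    | succ k ih =>
      intro hk
      have hk' : k < N := lt_of_lt_of_le (Nat.lt_succ_self k) hk
      have hYk := hY k hk'
      have hZk := hZ k hk'
      rw [ih hk'.le] at hYk
      exact hinj (k + 1) hk (Y (k + 1)) (Z (k + 1)) (hYk.trans hZk.symm)
  · intro Y hY
    set G : ℕ → ℝ := fun k => (Finset.range (k + 1)).sup' (by simp) (fun j => vecMaxNorm (g j))
      with hG
    have hGnn : ∀ k, 0 ≤ G k := fun k =>
      (vecMaxNorm_nonneg (g 0)).trans
        (Finset.le_sup' (fun j => vecMaxNorm (g j)) (Finset.mem_range.mpr (Nat.succ_pos k)))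
    have hGmono : ∀ k, G k ≤ G (k + 1) := fun k =>
      Finset.sup'_mono _ (Finset.range_subset_range.mpr (by omega)) _
    have hgG : ∀ j k : ℕ, j ≤ k → vecMaxNorm (g j) ≤ G k := fun j k hj =>
      Finset.le_sup' (fun j => vecMaxNorm (g j)) (Finset.mem_range.mpr (by omega))
    have step : ∀ k, k < N →
        vecMaxNorm (Y (k + 1)) ≤ vecMaxNorm (Y k) + τ * C_B * G (k + 1) := by
      intro k hk
      have hk1 : k + 1 ≤ N := hk
      have hkN : k ≤ N := by omega
      have h1 := hlow (k + 1) hk1 (Y (k + 1))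
      rw [hY k hk] at h1
      refine h1.trans ?_
      have hP : vecMaxNorm (((1 : Matrix (Fin n) (Fin n) ℝ)
            + (τ * (1 - θ)) • A k).mulVec (Y k)) ≤ vecMaxNorm (Y k) :=
        key_upper hs1 (hAdd k hkN) (hAdiag k hkN) (h2 k hkN) (Y k)
      have hw1 : vecMaxNorm ((B (k + 1)).mulVec (g (k + 1))) ≤ C_B * G (k + 1) :=
        (mulVec_bound hCB (hB (k + 1) hk1) _).trans
          (mul_le_mul_of_nonneg_left (hgG (k + 1) (k + 1) le_rfl) hCB)
      have hw0 : vecMaxNorm ((B k).mulVec (g k)) ≤ C_B * G (k + 1) :=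
        (mulVec_bound hCB (hB k hkN) _).trans
          (mul_le_mul_of_nonneg_left (hgG k (k + 1) (by omega)) hCB)
      have hin : vecMaxNorm (θ • (B (k + 1)).mulVec (g (k + 1))
            + (1 - θ) • (B k).mulVec (g k)) ≤ C_B * G (k + 1) := by
        have t1 := (vecMaxNorm_smul_le hθ0 ((B (k + 1)).mulVec (g (k + 1))))
        have t2 := (vecMaxNorm_smul_le (by linarith : (0:ℝ) ≤ 1 - θ) ((B k).mulVec (g k)))
        have := vecMaxNorm_add_le (θ • (B (k + 1)).mulVec (g (k + 1)))
          ((1 - θ) • (B k).mulVec (g k))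
        have m1 : θ * vecMaxNorm ((B (k + 1)).mulVec (g (k + 1))) ≤ θ * (C_B * G (k + 1)) :=
          mul_le_mul_of_nonneg_left hw1 hθ0
        have m2 : (1 - θ) * vecMaxNorm ((B k).mulVec (g k)) ≤ (1 - θ) * (C_B * G (k + 1)) :=
          mul_le_mul_of_nonneg_left hw0 (by linarith)
        nlinarith
      calc vecMaxNorm (((1 : Matrix (Fin n) (Fin n) ℝ) + (τ * (1 - θ)) • A k).mulVec (Y k)
            + τ • (θ • (B (k + 1)).mulVec (g (k + 1)) + (1 - θ) • (B k).mulVec (g k)))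
          ≤ vecMaxNorm (((1 : Matrix (Fin n) (Fin n) ℝ)
              + (τ * (1 - θ)) • A k).mulVec (Y k))
            + vecMaxNorm (τ • (θ • (B (k + 1)).mulVec (g (k + 1))
              + (1 - θ) • (B k).mulVec (g k))) := vecMaxNorm_add_le _ _
        _ ≤ vecMaxNorm (Y k) + τ * (C_B * G (k + 1)) := by
            refine add_le_add hP ?_
            refine (vecMaxNorm_smul_le hτ.le _).trans ?_
            exact mul_le_mul_of_nonneg_left hin hτ.le
        _ = vecMaxNorm (Y k) + τ * C_B * G (k + 1) := by ring
    have main : ∀ k, k ≤ N →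
        vecMaxNorm (Y k) ≤ vecMaxNorm (Y 0) + (k : ℝ) * τ * C_B * G k := by
      intro k
      induction k with
      | zero => intro _; simp
      | succ k ih =>
        intro hk
        have hkN : k < N := hk
        have hstep := step k hkN
        have hih := ih hkN.le
        have hmono : (k : ℝ) * τ * C_B * G k ≤ (k : ℝ) * τ * C_B * G (k + 1) :=
          mul_le_mul_of_nonneg_left (hGmono k) (by positivity)
        push_cast
        nlinarith [hmono, hstep, hih]
    intro k hk1 hkN
    have h := main k hkN
    have hkT : (k : ℝ) * τ ≤ T := by
      have : (k : ℝ) ≤ N := Nat.cast_le.mpr hkN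
      nlinarith
    have : (k : ℝ) * τ * C_B * G k ≤ C_B * T * G k := by
      have := mul_le_mul_of_nonneg_right hkT (mul_nonneg hCB (hGnn k))
      nlinarith
    calc vecMaxNorm (Y k) ≤ vecMaxNorm (Y 0) + (k : ℝ) * τ * C_B * G k := h
      _ ≤ vecMaxNorm (Y 0) + C_B * T * G k := by linarith
end
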